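/- Let k ≤ 0, η > 0, r > 0 and T > 0 be real numbers, set δ⁺ := −k + √(k²+η) and δ⁻ := −k − √(k²+η), and for t ∈ [0,T] set E(t) := e^{(δ⁺−δ⁻)(T−t)} and K(t) := [ −η (E(t) − 1) − r (δ⁺ − δ⁻ E(t)) ] / [ (δ⁻ − δ⁺ E(t)) − r (E(t) − 1) ]. Then the denominator (δ⁻ − δ⁺ E(t)) − r (E(t) − 1) is strictly negative for all t ∈ [0,T], K is differentiable on [0,T], K(T) = r, and K solves the terminal value Riccati problem K'(t) + 2k K(t) + η − K(t)² = 0 for all t ∈ [0,T]. -/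

import Mathlib

/-- Explicit solution of the scalar Riccati terminal value problem
`K' + 2kK + η − K² = 0`, `K(T) = r`, with `k ≤ 0`, `η > 0`, `r > 0`: with
`δ± = −k ± √(k²+η)`, `E(t) = e^{(δ⁺−δ⁻)(T−t)}` and
`K(t) = (−η(E(t)−1) − r(δ⁺ − δ⁻E(t))) / ((δ⁻ − δ⁺E(t)) − r(E(t)−1))`, the denominator is
strictly negative on `[0,T]`, `K` is differentiable on `[0,T]`, `K(T) = r`, and `K` solves the
Riccati equation on `[0,T]`. -/
theorem stmt14 (k η r T : ℝ) (hk : k ≤ 0) (hη : 0 < η) (hr : 0 < r) (hT : 0 < T)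
    (δp δm : ℝ) (hδp : δp = -k + Real.sqrt (k ^ 2 + η))
    (hδm : δm = -k - Real.sqrt (k ^ 2 + η))
    (E K : ℝ → ℝ)
    (hE : ∀ t, E t = Real.exp ((δp - δm) * (T - t)))
    (hK : ∀ t, K t =
      (-η * (E t - 1) - r * (δp - δm * E t)) / ((δm - δp * E t) - r * (E t - 1))) :
    (∀ t ∈ Set.Icc (0 : ℝ) T, (δm - δp * E t) - r * (E t - 1) < 0) ∧
    K T = r ∧
    ∀ t ∈ Set.Icc (0 : ℝ) T, ∃ K' : ℝ, HasDerivAt K K' t ∧ K' + 2 * k * K t + η - K t ^ 2 = 0 := by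
  have h0 : (0:ℝ) ≤ k ^ 2 + η := by positivity
  obtain ⟨s, hsdef⟩ : ∃ s, Real.sqrt (k ^ 2 + η) = s := ⟨_, rfl⟩
  rw [hsdef] at hδp hδm
  have hs2 : s ^ 2 = k ^ 2 + η := by rw [← hsdef]; exact Real.sq_sqrt h0
  have hs_nonneg : 0 ≤ s := by rw [← hsdef]; exact Real.sqrt_nonneg _
  have hs_pos : 0 < s := by nlinarith
  have hsk : -k < s := by nlinarith
  have hδppos : 0 < δp := by rw [hδp]; linarith
  have hδmneg : δm < 0 := by rw [hδm]; linarith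
  have hEpos : ∀ t, 0 < E t := fun t => by rw [hE]; exact Real.exp_pos _
  have hEge : ∀ t ∈ Set.Icc (0:ℝ) T, 1 ≤ E t := by
    intro t ht
    rw [hE]
    have h1 : 0 ≤ (δp - δm) * (T - t) :=
      mul_nonneg (by linarith) (by linarith [ht.2])
    calc (1:ℝ) = Real.exp 0 := Real.exp_zero.symm
      _ ≤ _ := Real.exp_le_exp.mpr h1
  have hDneg : ∀ t ∈ Set.Icc (0:ℝ) T, (δm - δp * E t) - r * (E t - 1) < 0 := by
    intro t ht
    have h1 := hEge t ht
    nlinarith [mul_le_mul_of_nonneg_left h1 hδppos.le]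
  refine ⟨hDneg, ?_, ?_⟩
  · have hET : E T = 1 := by rw [hE]; simp
    rw [hK, hET]
    have hne : δm - δp ≠ 0 := by linarith
    field_simp
    have h2 : (-δp + δm) * (-δp + δm)⁻¹ = 1 := mul_inv_cancel₀ (by linarith)
    linear_combination r * h2
  · intro t ht
    have hKfun : K = fun u =>
        (-η * (Real.exp ((δp - δm) * (T - u)) - 1) -
          r * (δp - δm * Real.exp ((δp - δm) * (T - u)))) /
        ((δm - δp * Real.exp ((δp - δm) * (T - u))) -
          r * (Real.exp ((δp - δm) * (T - u)) - 1)) := by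
      funext u; rw [hK, hE]
    have hDne : (δm - δp * E t) - r * (E t - 1) ≠ 0 := (hDneg t ht).ne
    rw [hE] at hDne
    -- derivative of the exponent
    have hlin : HasDerivAt (fun u : ℝ => (δp - δm) * (T - u)) (-(δp - δm)) t := by
      simpa using ((hasDerivAt_const t T).sub (hasDerivAt_id t)).const_mul (δp - δm)
    have hexp := hlin.exp
    set e := Real.exp ((δp - δm) * (T - t)) with he
    set e' := e * -(δp - δm) with he'
    have hN : HasDerivAt (fun u =>
        -η * (Real.exp ((δp - δm) * (T - u)) - 1) -
          r * (δp - δm * Real.exp ((δp - δm) * (T - u))))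
        (-η * e' - r * -(δm * e')) t := by
      exact ((hexp.sub_const 1).const_mul (-η)).sub
        (((hexp.const_mul δm).const_sub δp).const_mul r)
    have hD : HasDerivAt (fun u =>
        (δm - δp * Real.exp ((δp - δm) * (T - u))) -
          r * (Real.exp ((δp - δm) * (T - u)) - 1))
        (-(δp * e') - r * e') t := by
      exact ((hexp.const_mul δp).const_sub δm).sub ((hexp.sub_const 1).const_mul r)
    have hKd := hN.div hD hDne
    simp only [Pi.div_def] at hKd
    rw [← hKfun] at hKd
    refine ⟨_, hKd, ?_⟩
    rw [hK t, hE t, ← he]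
    have hepos : 0 < e := Real.exp_pos _
    have hη' : η = s ^ 2 - k ^ 2 := by linarith
    subst hδp hδm hη'
    field_simp
    ring
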